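/- Let R ≥ 2 be an integer. For every integer p > 0, the proportion of graphs G in G_{n,R} which have distinct vertices v and w with deg_G(v) ≤ R−2, deg_G(w) ≤ R−1, and a path of length p from v to w, tends to 0 as n → ∞. -/

import Mathlib

open Filter Topology

/-- The degree of a vertex `v` in a simple graph `G`. -/
noncomputable def degS {n : ℕ} (G : SimpleGraph (Fin n)) (v : Fin n) : ℕ :=
  Set.ncard {w | G.Adj v w}

/-- The proportion of graphs on `{1,…,n}` with maximum degree at most `R`
that satisfy the property `P`. -/
noncomputable def graphProp (n R : ℕ) (P : SimpleGraph (Fin n) → Prop) : ℝ :=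
  (Nat.card {G : SimpleGraph (Fin n) // (∀ v, degS G v ≤ R) ∧ P G} : ℝ) /
  (Nat.card {G : SimpleGraph (Fin n) // ∀ v, degS G v ≤ R} : ℝ)

/-!
Let `𝒢` be the graphs on `n` vertices of maximum degree at most `R` and `D(G)` the vertices of
degree `< R`. Joining two non-adjacent vertices of `D(G)` is an injective switching into `𝒢`,
whence `∑_{G ∈ 𝒢} |D(G)|² ≤ (2R + 1) n |𝒢|`. A graph with fewer than `n / 2` edges has
`|D(G)| ≥ n / 2`, so such graphs form an `O(1/n)` proportion of `𝒢`.

Let `G` have at least `n / 2` edges and a `p`-walk `v = f 0, …, f p = w` with `v ≠ w`,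
`deg v ≤ R - 2`, `deg w ≤ R - 1`. There are `(n - O(1))²` ordered pairs of edges `ab`, `cd`
with `a, b, c, d` off the walk, not adjacent to `v` or `w`, and `{a, b} ∩ {c, d} = ∅`. Replacing
`ab, cd` by `va, vc, wb` gives a graph `G'` of `𝒢` in which the walk survives and `d ∈ D(G')`;
`G` is recovered from `G'` and `(f, a, b, c, d)`, and given `G'` there are at most
`n R^(p+3) |D(G')|` such tuples. Hence such graphs number at most
`n R^(p+3) ∑ |D| / (n - O(1))² = O(n^(-1/2)) |𝒢|` by Cauchy–Schwarz.
-/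

open Finset SimpleGraph
open scoped Classical

theorem Finset.sum_card_le_sum_card_of_switching {ι κ : Type*} {s : Finset ι}
    {A B : ι → Finset κ} (φ : ι → κ → ι)
    (hφ : ∀ i ∈ s, ∀ z ∈ A i, φ i z ∈ s ∧ z ∈ B (φ i z))
    (hinj : ∀ i ∈ s, ∀ j ∈ s, ∀ z ∈ A i, z ∈ A j → φ i z = φ j z → i = j) :
    ∑ i ∈ s, #(A i) ≤ ∑ i ∈ s, #(B i) := by
  simp only [← card_sigma]
  refine card_le_card_of_injOn (fun x => ⟨φ x.1 x.2, x.2⟩) ?_ ?_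
  · rintro ⟨i, z⟩ h
    simp only [coe_sigma, Set.mem_sigma_iff, mem_coe] at h ⊢
    exact hφ i h.1 z h.2
  · rintro ⟨i, z⟩ hi ⟨j, z'⟩ hj h
    simp only [coe_sigma, Set.mem_sigma_iff, mem_coe, Sigma.mk.injEq] at hi hj h
    obtain ⟨hφij, rfl⟩ := h
    obtain rfl := hinj i hi.1 j hj.1 z hi.2 hj.2 hφij
    rfl

namespace SimpleGraph

variable {V : Type*}

noncomputable def switch (G : SimpleGraph V) (D A : Finset (Sym2 V)) : SimpleGraph V :=
  (G ⊔ fromEdgeSet A).deleteEdges D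

section Switch

variable {G H : SimpleGraph V} {D A : Finset (Sym2 V)}

theorem switch_adj {x y : V} :
    (G.switch D A).Adj x y ↔ (G.Adj x y ∨ s(x, y) ∈ A ∧ x ≠ y) ∧ s(x, y) ∉ D := by
  rw [switch, deleteEdges_adj, sup_adj, fromEdgeSet_adj, mem_coe, mem_coe]

theorem edgeSet_switch :
    (G.switch D A).edgeSet = (G.edgeSet ∪ (A \ Sym2.diagSet)) \ D := by
  rw [switch, edgeSet_deleteEdges, edgeSet_sup, edgeSet_fromEdgeSet]

theorem edgeSet_eq_of_switch (hD : ↑D ⊆ G.edgeSet)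
    (hA : Disjoint (A : Set (Sym2 V)) G.edgeSet) :
    G.edgeSet = (G.switch D A).edgeSet \ A ∪ D := by
  rw [edgeSet_switch]
  ext e
  have := @hD e
  have := @Set.disjoint_left.1 hA e
  simp only [Set.mem_union, Set.mem_sdiff, Sym2.mem_diagSet, mem_coe] at *
  tauto

theorem eq_of_switch_eq (h : G.switch D A = H.switch D A)
    (hG : ↑D ⊆ G.edgeSet) (hH : ↑D ⊆ H.edgeSet)
    (hGA : Disjoint (A : Set (Sym2 V)) G.edgeSet) (hHA : Disjoint (A : Set (Sym2 V)) H.edgeSet) :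
    G = H := by
  rw [← edgeSet_inj, edgeSet_eq_of_switch hG hGA, edgeSet_eq_of_switch hH hHA, h]

theorem degree_switch_add_le [Fintype V] (hD : ↑D ⊆ G.edgeSet) (x : V) :
    (G.switch D A).degree x + #{e ∈ D | x ∈ e} ≤ G.degree x + #{e ∈ A | x ∈ e} := by
  have hdisj : Disjoint ((G.switch D A).incidenceFinset x) {e ∈ D | x ∈ e} := by
    rw [Finset.disjoint_left]
    intro e he heD
    simp only [mem_incidenceFinset, incidenceSet, edgeSet_switch, mem_filter] at he heD
    exact he.1.2 heD.1
  have hsub : (G.switch D A).incidenceFinset x ∪ {e ∈ D | x ∈ e} ⊆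
      G.incidenceFinset x ∪ {e ∈ A | x ∈ e} := by
    intro e he
    have := @hD e
    simp only [mem_union, mem_incidenceFinset, incidenceSet, edgeSet_switch, mem_filter,
      Set.mem_ofPred_eq, Set.mem_sdiff, Set.mem_union, mem_coe] at this he ⊢
    tauto
  rw [← card_incidenceFinset_eq_degree, ← card_incidenceFinset_eq_degree,
    ← card_union_of_disjoint hdisj]
  exact (card_le_card hsub).trans (card_union_le _ _)

end Switch

variable [Fintype V] {G H : SimpleGraph V} {R p : ℕ}

noncomputable def adjPairs (G : SimpleGraph V) : Finset (V × V) := {q | G.Adj q.1 q.2}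

noncomputable def deficient (G : SimpleGraph V) (R : ℕ) : Finset V := {v | G.degree v < R}

variable (V) in
noncomputable def boundedDegreeGraphs (R : ℕ) : Finset (SimpleGraph V) :=
  {G | ∀ v, G.degree v ≤ R}

theorem mem_boundedDegreeGraphs : G ∈ boundedDegreeGraphs V R ↔ ∀ v, G.degree v ≤ R := by
  simp [boundedDegreeGraphs]

theorem card_filter_adjPairs_fst_mem (G : SimpleGraph V) (B : Finset V) :
    #{q ∈ G.adjPairs | q.1 ∈ B} = ∑ x ∈ B, G.degree x := by
  have : {q ∈ G.adjPairs | q.1 ∈ B} = {q ∈ B ×ˢ (univ : Finset V) | G.Adj q.1 q.2} := by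
    ext; simp [adjPairs, and_comm]
  rw [this, card_filter, sum_product]
  refine sum_congr rfl fun x _ => ?_
  rw [← card_neighborFinset_eq_degree, neighborFinset_eq_filter, card_filter]

theorem card_filter_adjPairs_snd_mem (G : SimpleGraph V) (B : Finset V) :
    #{q ∈ G.adjPairs | q.2 ∈ B} = ∑ x ∈ B, G.degree x := by
  rw [← card_filter_adjPairs_fst_mem]
  exact card_equiv (Equiv.prodComm V V) (by simp [adjPairs, G.adj_comm])

theorem card_adjPairs (G : SimpleGraph V) : #G.adjPairs = ∑ x, G.degree x := by
  simpa using G.card_filter_adjPairs_fst_mem univ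

theorem sum_degree_le (hG : ∀ v, G.degree v ≤ R) (B : Finset V) :
    ∑ x ∈ B, G.degree x ≤ #B * R := by
  simpa using sum_le_card_nsmul B _ R fun x _ => hG x

theorem card_adjPairs_le (hG : ∀ v, G.degree v ≤ R) : #G.adjPairs ≤ Fintype.card V * R := by
  simpa [card_adjPairs] using sum_degree_le hG univ

noncomputable def avoidingAdjPairs (G : SimpleGraph V) (B : Finset V) : Finset (V × V) :=
  {q ∈ G.adjPairs | q.1 ∉ B ∧ q.2 ∉ B}

theorem card_adjPairs_le_card_avoidingAdjPairs_add (hG : ∀ v, G.degree v ≤ R) (B : Finset V) :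
    #G.adjPairs ≤ #(G.avoidingAdjPairs B) + 2 * R * #B := by
  have hcover : G.adjPairs ⊆ G.avoidingAdjPairs B ∪
      {q ∈ G.adjPairs | q.1 ∈ B} ∪ {q ∈ G.adjPairs | q.2 ∈ B} := by
    intro q hq
    simp only [avoidingAdjPairs, mem_union, mem_filter]
    tauto
  calc #G.adjPairs
      ≤ #(G.avoidingAdjPairs B) + #{q ∈ G.adjPairs | q.1 ∈ B} + #{q ∈ G.adjPairs | q.2 ∈ B} :=
        (card_le_card hcover).trans <| (card_union_le _ _).trans <|
          Nat.add_le_add_right (card_union_le _ _) _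
    _ ≤ #(G.avoidingAdjPairs B) + #B * R + #B * R := by
        rw [card_filter_adjPairs_fst_mem, card_filter_adjPairs_snd_mem]
        gcongr <;> exact sum_degree_le hG B
    _ = _ := by ring

noncomputable def addablePairs (G : SimpleGraph V) (R : ℕ) : Finset (V × V) :=
  {q ∈ (G.deficient R).offDiag | ¬G.Adj q.1 q.2}

theorem card_deficient_sq_le (G : SimpleGraph V) (R : ℕ) :
    #(G.deficient R) ^ 2 ≤ #(G.addablePairs R) + #G.adjPairs + Fintype.card V := by
  have hsplit : (G.deficient R).offDiag ⊆ G.addablePairs R ∪ G.adjPairs := by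
    intro q hq
    by_cases h : G.Adj q.1 q.2 <;> simp [addablePairs, adjPairs, hq, h]
  have hle : #(G.deficient R) ≤ Fintype.card V := card_le_univ _
  have := (card_le_card hsplit).trans (card_union_le _ _)
  rw [offDiag_card] at this
  have : #(G.deficient R) ≤ #(G.deficient R) * #(G.deficient R) :=
    Nat.le_mul_self _
  rw [sq]
  omega

theorem sum_card_addablePairs_le (R : ℕ) :
    ∑ G ∈ boundedDegreeGraphs V R, #(G.addablePairs R) ≤
      ∑ G ∈ boundedDegreeGraphs V R, #G.adjPairs := by
  refine sum_card_le_sum_card_of_switching (fun G q => G.switch ∅ {s(q.1, q.2)}) ?_ ?_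
  · rintro G hG ⟨u, w⟩ hq
    simp only [addablePairs, deficient, mem_filter, mem_offDiag, mem_univ, true_and] at hq
    obtain ⟨⟨hu, hw, huw⟩, hadj⟩ := hq
    rw [mem_boundedDegreeGraphs] at hG
    refine ⟨mem_boundedDegreeGraphs.2 fun x => ?_, ?_⟩ <;> dsimp only
    · have := degree_switch_add_le (G := G) (D := ∅) (A := {s(u, w)}) (by simp) x
      have hA := card_filter_le ({s(u, w)} : Finset (Sym2 V)) (x ∈ ·)
      rw [card_singleton] at hA
      by_cases hx : x ∈ s(u, w)
      · have : G.degree x < R := by rcases Sym2.mem_iff.1 hx with rfl | rfl <;> assumption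
        omega
      · simp only [filter_singleton, hx, if_false, card_empty, add_zero] at this
        exact this.trans (hG x)
    · simp [adjPairs, switch_adj, huw]
  · rintro G - H - ⟨u, w⟩ hG hH h
    simp only [addablePairs, mem_filter] at hG hH
    refine eq_of_switch_eq h (by simp) (by simp) ?_ ?_
    · simpa using hG.2
    · simpa using hH.2

theorem sum_card_deficient_sq_le (R : ℕ) :
    ∑ G ∈ boundedDegreeGraphs V R, #(G.deficient R) ^ 2 ≤
      (2 * R + 1) * Fintype.card V * #(boundedDegreeGraphs V R) := by
  have hadj : ∑ G ∈ boundedDegreeGraphs V R, #G.adjPairs ≤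
      #(boundedDegreeGraphs V R) * (Fintype.card V * R) := by
    simpa using sum_le_card_nsmul _ _ _ fun G hG =>
      card_adjPairs_le (mem_boundedDegreeGraphs.1 hG)
  calc ∑ G ∈ boundedDegreeGraphs V R, #(G.deficient R) ^ 2
      ≤ ∑ G ∈ boundedDegreeGraphs V R, (#(G.addablePairs R) + #G.adjPairs + Fintype.card V) :=
        sum_le_sum fun G _ => card_deficient_sq_le G R
    _ = ∑ G ∈ boundedDegreeGraphs V R, #(G.addablePairs R) +
          ∑ G ∈ boundedDegreeGraphs V R, #G.adjPairs +
          #(boundedDegreeGraphs V R) * Fintype.card V := by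
        rw [sum_add_distrib, sum_add_distrib, sum_const, smul_eq_mul]
    _ ≤ _ := by
        have := sum_card_addablePairs_le (V := V) R
        nlinarith

theorem card_le_two_mul_card_deficient (hR : 2 ≤ R) (hsparse : #G.adjPairs < Fintype.card V) :
    Fintype.card V ≤ 2 * #(G.deficient R) := by
  have hfull : R * #(G.deficient R)ᶜ ≤ #G.adjPairs :=
    calc R * #(G.deficient R)ᶜ = #(G.deficient R)ᶜ • R := by rw [smul_eq_mul, mul_comm]
      _ ≤ ∑ x ∈ (G.deficient R)ᶜ, G.degree x :=
        card_nsmul_le_sum _ _ _ fun x hx => by simpa [deficient] using hx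
      _ = #{q ∈ G.adjPairs | q.1 ∈ (G.deficient R)ᶜ} := (card_filter_adjPairs_fst_mem _ _).symm
      _ ≤ #G.adjPairs := card_filter_le _ _
  have := card_add_card_compl (G.deficient R)
  have : 2 * #(G.deficient R)ᶜ ≤ R * #(G.deficient R)ᶜ := Nat.mul_le_mul_right _ hR
  omega

theorem card_sparse_mul_le (hR : 2 ≤ R) :
    #{G ∈ boundedDegreeGraphs V R | #G.adjPairs < Fintype.card V} * Fintype.card V ≤
      4 * (2 * R + 1) * #(boundedDegreeGraphs V R) := by
  rcases (Fintype.card V).eq_zero_or_pos with hn | hn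
  · simp [hn]
  refine Nat.le_of_mul_le_mul_right ?_ hn
  calc #{G ∈ boundedDegreeGraphs V R | #G.adjPairs < Fintype.card V} * Fintype.card V *
        Fintype.card V
      = ∑ G ∈ boundedDegreeGraphs V R with #G.adjPairs < Fintype.card V, Fintype.card V ^ 2 := by
        rw [sum_const, smul_eq_mul]; ring
    _ ≤ ∑ G ∈ boundedDegreeGraphs V R with #G.adjPairs < Fintype.card V,
          4 * #(G.deficient R) ^ 2 := sum_le_sum fun G hG => by
        have hsparse := (mem_filter.1 hG).2
        have := card_le_two_mul_card_deficient hR hsparse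
        nlinarith
    _ ≤ ∑ G ∈ boundedDegreeGraphs V R, 4 * #(G.deficient R) ^ 2 :=
        sum_le_sum_of_subset (filter_subset _ _)
    _ = 4 * ∑ G ∈ boundedDegreeGraphs V R, #(G.deficient R) ^ 2 := (mul_sum _ _ _).symm
    _ ≤ 4 * ((2 * R + 1) * Fintype.card V * #(boundedDegreeGraphs V R)) := by
        gcongr
        exact sum_card_deficient_sq_le R
    _ = _ := by ring

noncomputable def adjChains (G : SimpleGraph V) (p : ℕ) : Finset (Fin (p + 1) → V) :=
  {f | ∀ i : Fin p, G.Adj (f i.castSucc) (f i.succ)}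

theorem card_adjChains_le (hG : ∀ v, G.degree v ≤ R) (p : ℕ) :
    #(G.adjChains p) ≤ Fintype.card V * R ^ p := by
  induction p with
  | zero => simpa using card_le_univ (G.adjChains 0)
  | succ p ih =>
    have hstep : #(G.adjChains (p + 1)) ≤ R * #(G.adjChains p) := by
      refine card_le_mul_card_image_of_maps_to (f := Fin.tail) ?_ R fun g _ => ?_
      · intro f hf
        simp only [adjChains, mem_filter, mem_univ, true_and] at hf ⊢
        intro i
        simpa [Fin.tail] using hf i.succ
      · calc #{f ∈ G.adjChains (p + 1) | Fin.tail f = g}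
            ≤ #(G.neighborFinset (g 0)) := by
              refine card_le_card_of_injOn (fun f => f 0) ?_ ?_
              · intro f hf
                simp only [adjChains, coe_filter, mem_filter, mem_univ, true_and,
                  Set.mem_ofPred_eq] at hf
                obtain ⟨hf, rfl⟩ := hf
                rw [mem_coe, mem_neighborFinset]
                simpa [Fin.tail] using (hf 0).symm
              · intro f hf f' hf' h
                simp only [adjChains, coe_filter, mem_filter, mem_univ, true_and,
                  Set.mem_ofPred_eq] at hf hf'
                rw [← Fin.cons_self_tail f, ← Fin.cons_self_tail f', hf.2, hf'.2]
                simp only at h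
                rw [h]
          _ ≤ R := hG _
    calc #(G.adjChains (p + 1)) ≤ R * (Fintype.card V * R ^ p) := hstep.trans (by gcongr)
      _ = Fintype.card V * R ^ (p + 1) := by ring

theorem Walk.getVert_mem_adjChains {u v : V} (W : G.Walk u v) (hW : W.length = p) :
    (fun i : Fin (p + 1) => W.getVert i) ∈ G.adjChains p := by
  simp only [adjChains, mem_filter, mem_univ, true_and]
  intro i
  simpa using W.adj_getVert_succ (i := i) (by omega)

noncomputable def deficientChains (G : SimpleGraph V) (R p : ℕ) : Finset (Fin (p + 1) → V) :=
  {f ∈ G.adjChains p | f 0 ≠ f (Fin.last p) ∧ G.degree (f 0) + 2 ≤ R ∧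
    G.degree (f (Fin.last p)) < R}

theorem deficientChains_nonempty_of_walk (hR : 2 ≤ R) {v w : V} (hvw : v ≠ w)
    (hv : G.degree v ≤ R - 2) (hw : G.degree w ≤ R - 1) (W : G.Walk v w) (hW : W.length = p) :
    (G.deficientChains R p).Nonempty := by
  have h0 : W.getVert (0 : Fin (p + 1)) = v := by simp
  have hlast : W.getVert (Fin.last p) = w := by simp [← hW]
  refine ⟨_, mem_filter.2 ⟨W.getVert_mem_adjChains hW, ?_⟩⟩
  rw [h0, hlast]
  exact ⟨hvw, by omega, by omega⟩

noncomputable def blockedVertices (G : SimpleGraph V) (f : Fin (p + 1) → V) :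
    Finset V :=
  univ.image f ∪ G.neighborFinset (f 0) ∪ G.neighborFinset (f (Fin.last p))

noncomputable def switchSources (G : SimpleGraph V) (R p : ℕ) :
    Finset ((Fin (p + 1) → V) × (V × V) × (V × V)) :=
  {z | z.1 ∈ G.deficientChains R p ∧ z.2.1 ∈ G.avoidingAdjPairs (G.blockedVertices z.1) ∧
    z.2.2 ∈ G.avoidingAdjPairs (G.blockedVertices z.1 ∪ {z.2.1.1, z.2.1.2})}

noncomputable def switchTargets (G : SimpleGraph V) (R p : ℕ) :
    Finset ((Fin (p + 1) → V) × (V × V) × (V × V)) :=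
  {z | z.1 ∈ G.adjChains p ∧ G.Adj (z.1 0) z.2.1.1 ∧ G.Adj (z.1 0) z.2.2.1 ∧
    G.Adj (z.1 (Fin.last p)) z.2.1.2 ∧ z.2.2.2 ∈ G.deficient R}

theorem card_blockedVertices_le (hG : ∀ v, G.degree v ≤ R) (f : Fin (p + 1) → V) :
    #(G.blockedVertices f) ≤ p + 1 + 2 * R := by
  have himage : #(univ.image f) ≤ p + 1 := card_image_le.trans (by simp)
  have h0 := hG (f 0)
  have hlast := hG (f (Fin.last p))
  rw [← card_neighborFinset_eq_degree] at h0 hlast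
  have := card_union_le (univ.image f) (G.neighborFinset (f 0))
  have := card_union_le (univ.image f ∪ G.neighborFinset (f 0))
    (G.neighborFinset (f (Fin.last p)))
  rw [blockedVertices]
  omega

theorem card_switchSources_ge (hG : ∀ v, G.degree v ≤ R) (hdense : Fintype.card V ≤ #G.adjPairs)
    {f : Fin (p + 1) → V} (hf : f ∈ G.deficientChains R p) :
    (Fintype.card V - 2 * R * (p + 2 * R + 3)) ^ 2 ≤ #(G.switchSources R p) := by
  set m := Fintype.card V - 2 * R * (p + 2 * R + 3)
  have havoid : ∀ B : Finset V, #B ≤ p + 2 * R + 3 → m ≤ #(G.avoidingAdjPairs B) := by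
    intro B hB
    have := card_adjPairs_le_card_avoidingAdjPairs_add hG B
    have : 2 * R * #B ≤ 2 * R * (p + 2 * R + 3) := by gcongr
    omega
  have hB := card_blockedVertices_le hG f
  have hfirst : m ≤ #(G.avoidingAdjPairs (G.blockedVertices f)) := havoid _ (by omega)
  have hsecond : ∀ q : V × V,
      m ≤ #(G.avoidingAdjPairs (G.blockedVertices f ∪ {q.1, q.2})) := fun q =>
    havoid _ <| (card_union_le _ _).trans <| by
      have := card_le_two (a := q.1) (b := q.2)
      omega
  calc m ^ 2 ≤ #(G.avoidingAdjPairs (G.blockedVertices f)) • m := by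
        rw [sq, smul_eq_mul]
        exact Nat.mul_le_mul_right m hfirst
    _ ≤ ∑ q ∈ G.avoidingAdjPairs (G.blockedVertices f),
          #(G.avoidingAdjPairs (G.blockedVertices f ∪ {q.1, q.2})) :=
        card_nsmul_le_sum _ _ _ fun q _ => hsecond q
    _ = #((G.avoidingAdjPairs (G.blockedVertices f)).sigma
          fun q => G.avoidingAdjPairs (G.blockedVertices f ∪ {q.1, q.2})) := (card_sigma _ _).symm
    _ ≤ #(G.switchSources R p) := by
        refine card_le_card_of_injOn (fun x => (f, x.1, x.2)) ?_ ?_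
        · rintro ⟨q, r⟩ h
          simp only [coe_sigma, Set.mem_sigma_iff, mem_coe] at h
          simp only [switchSources, coe_filter, mem_univ, true_and, Set.mem_ofPred_eq]
          exact ⟨hf, h⟩
        · rintro ⟨q, r⟩ - ⟨q', r'⟩ - h
          simp only [Prod.mk.injEq] at h
          obtain ⟨-, rfl, rfl⟩ := h
          rfl

theorem card_switchTargets_le (hG : ∀ v, G.degree v ≤ R) (p : ℕ) :
    #(G.switchTargets R p) ≤ Fintype.card V * R ^ (p + 3) * #(G.deficient R) := by
  have hsub : G.switchTargets R p ⊆ (G.adjChains p).biUnion fun f =>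
      {f} ×ˢ ((G.neighborFinset (f 0) ×ˢ G.neighborFinset (f (Fin.last p))) ×ˢ
        (G.neighborFinset (f 0) ×ˢ G.deficient R)) := by
    rintro ⟨f, ⟨a, b⟩, c, d⟩ h
    simp only [switchTargets, mem_filter, mem_univ, true_and] at h
    simp [h]
  calc #(G.switchTargets R p) ≤ ∑ f ∈ G.adjChains p, R ^ 3 * #(G.deficient R) := by
        refine (card_le_card hsub).trans (card_biUnion_le.trans (sum_le_sum fun f _ => ?_))
        simp only [card_product, card_singleton, card_neighborFinset_eq_degree]
        calc 1 * (G.degree (f 0) * G.degree (f (Fin.last p)) * (G.degree (f 0) * #(G.deficient R)))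
            ≤ 1 * (R * R * (R * #(G.deficient R))) := by gcongr <;> exact hG _
          _ = R ^ 3 * #(G.deficient R) := by ring
    _ = #(G.adjChains p) * (R ^ 3 * #(G.deficient R)) := by rw [sum_const, smul_eq_mul]
    _ ≤ Fintype.card V * R ^ p * (R ^ 3 * #(G.deficient R)) := by
        gcongr
        exact card_adjChains_le hG p
    _ = _ := by ring

theorem of_mem_switchSources {f : Fin (p + 1) → V} {a b c d : V}
    (h : (f, (a, b), c, d) ∈ G.switchSources R p) :
    f ∈ G.deficientChains R p ∧ G.Adj a b ∧ G.Adj c d ∧ [f 0, f (Fin.last p), a, b, c, d].Nodup ∧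
      a ∉ Set.range f ∧ c ∉ Set.range f ∧
      ¬G.Adj (f 0) a ∧ ¬G.Adj (f 0) c ∧ ¬G.Adj (f (Fin.last p)) b := by
  simp only [switchSources, avoidingAdjPairs, blockedVertices, adjPairs, mem_filter, mem_univ,
    true_and, mem_union, mem_image, mem_neighborFinset, mem_insert, mem_singleton, not_or,
    not_exists] at h
  obtain ⟨hf, ⟨hab, ⟨⟨ha, hva⟩, -⟩, ⟨hb, -⟩, hwb⟩, hcd, ⟨⟨⟨hc, hvc⟩, -⟩, hca, hcb⟩, ⟨⟨hd, -⟩, -⟩,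
    hda, hdb⟩ := h
  have hvw := (mem_filter.1 hf).2.1
  refine ⟨hf, hab, hcd, ?_, by simpa using ha, by simpa using hc, hva, hvc, hwb⟩
  simp only [List.nodup_cons, List.mem_cons, List.not_mem_nil, or_false, not_or, List.nodup_nil,
    and_true, not_false_eq_true]
  refine ⟨⟨hvw, ha 0, hb 0, hc 0, hd 0⟩, ⟨ha _, hb _, hc _, hd _⟩,
    ⟨hab.ne, Ne.symm hca, Ne.symm hda⟩, ⟨Ne.symm hcb, Ne.symm hdb⟩, hcd.ne⟩

-- Replacing `ab, cd` by `va, vc, wb`: `a`, `b`, `c` keep their degree, `v` gains two,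
-- `w` gains one and `d` loses one.
theorem degree_switch_le_of_nodup {v w a b c d : V} (hnd : [v, w, a, b, c, d].Nodup)
    (hab : G.Adj a b) (hcd : G.Adj c d) (hG : ∀ x, G.degree x ≤ R) (hv : G.degree v + 2 ≤ R)
    (hw : G.degree w < R) :
    (∀ x, (G.switch {s(a, b), s(c, d)} {s(v, a), s(v, c), s(w, b)}).degree x ≤ R) ∧
      (G.switch {s(a, b), s(c, d)} {s(v, a), s(v, c), s(w, b)}).degree d < R := by
  simp only [List.nodup_cons, List.mem_cons, List.not_mem_nil, or_false, not_or, List.nodup_nil,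
    and_true, not_false_eq_true] at hnd
  obtain ⟨⟨hvw, hva, hvb, hvc, hvd⟩, ⟨hwa, hwb, hwc, hwd⟩, ⟨hab', hac, had⟩, ⟨hbc, hbd⟩, hcd'⟩ :=
    hnd
  have hD : (↑({s(a, b), s(c, d)} : Finset (Sym2 V)) : Set (Sym2 V)) ⊆ G.edgeSet := by
    simp [Set.insert_subset_iff, hab, hcd]
  have key : ∀ x, (G.switch {s(a, b), s(c, d)} {s(v, a), s(v, c), s(w, b)}).degree x +
      (if x = d then 1 else 0) ≤ G.degree x + (if x = v then 2 else if x = w then 1 else 0) := by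
    intro x
    have := degree_switch_add_le (A := {s(v, a), s(v, c), s(w, b)}) hD x
    have hcases : x = v ∨ x = w ∨ x = a ∨ x = b ∨ x = c ∨ x = d ∨
        (x ≠ v ∧ x ≠ w ∧ x ≠ a ∧ x ≠ b ∧ x ≠ c ∧ x ≠ d) := by tauto
    rcases hcases with rfl | rfl | rfl | rfl | rfl | rfl | ⟨h1, h2, h3, h4, h5, h6⟩ <;>
      simp_all [filter_insert, filter_singleton, Sym2.mem_iff, card_insert_of_notMem, eq_comm]
  refine ⟨fun x => ?_, ?_⟩
  · have hx := key x
    have := hG x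
    rcases eq_or_ne x v with rfl | hxv
    · simp only [if_true] at hx
      omega
    rcases eq_or_ne x w with rfl | hxw
    · simp only [hxv, if_true, if_false] at hx
      omega
    · simp only [hxv, hxw, if_false] at hx
      omega
  · have hd := key d
    simp only [if_true, Ne.symm hvd, Ne.symm hwd, if_false, add_zero] at hd
    have := hG d
    omega

-- For `z = (f, (a, b), (c, d))`, replace the edges `ab`, `cd` by `va`, `vc`, `wb`, where
-- `v = f 0` and `w = f p` are the ends of the chain.
noncomputable def chainSwitch (G : SimpleGraph V) (z : (Fin (p + 1) → V) × (V × V) × (V × V)) :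
    SimpleGraph V :=
  G.switch {s(z.2.1.1, z.2.1.2), s(z.2.2.1, z.2.2.2)}
    {s(z.1 0, z.2.1.1), s(z.1 0, z.2.2.1), s(z.1 (Fin.last p), z.2.1.2)}

theorem chainSwitch_mem (hG : G ∈ boundedDegreeGraphs V R)
    {z : (Fin (p + 1) → V) × (V × V) × (V × V)} (hz : z ∈ G.switchSources R p) :
    G.chainSwitch z ∈ boundedDegreeGraphs V R ∧ z ∈ (G.chainSwitch z).switchTargets R p := by
  obtain ⟨f, ⟨a, b⟩, c, d⟩ := z
  obtain ⟨hf, hab, hcd, hnd, ha, hc, -, -, -⟩ := of_mem_switchSources hz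
  obtain ⟨hchain, -, hv, hw⟩ := mem_filter.1 hf
  obtain ⟨hdeg, hd⟩ :=
    degree_switch_le_of_nodup hnd hab hcd (mem_boundedDegreeGraphs.1 hG) hv hw
  simp only [List.nodup_cons, List.mem_cons, List.not_mem_nil, or_false, not_or, List.nodup_nil,
    and_true, not_false_eq_true] at hnd
  obtain ⟨⟨-, hva, hvb, hvc, hvd⟩, ⟨hwa, hwb, hwc, hwd⟩, -, -, -⟩ := hnd
  simp only [Set.mem_range, not_exists] at ha hc
  simp only [adjChains, mem_filter, mem_univ, true_and] at hchain
  refine ⟨mem_boundedDegreeGraphs.2 hdeg, ?_⟩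
  dsimp only [chainSwitch]
  simp only [switchTargets, mem_filter, mem_univ, true_and]
  refine ⟨?_, ?_, ?_, ?_, by simpa [deficient] using hd⟩
  · simp only [adjChains, mem_filter, mem_univ, true_and]
    intro i
    rw [switch_adj]
    exact ⟨Or.inl (hchain i), by simp [ha, hc]⟩
  · simp [switch_adj, hva, hvb, hvc, hvd]
  · simp [switch_adj, hva, hvb, hvc, hvd]
  · simp [switch_adj, hwa, hwb, hwc, hwd]

theorem eq_of_chainSwitch_eq {z : (Fin (p + 1) → V) × (V × V) × (V × V)}
    (hG : z ∈ G.switchSources R p) (hH : z ∈ H.switchSources R p)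
    (h : G.chainSwitch z = H.chainSwitch z) : G = H := by
  obtain ⟨f, ⟨a, b⟩, c, d⟩ := z
  obtain ⟨-, hab, hcd, -, -, -, hva, hvc, hwb⟩ := of_mem_switchSources hG
  obtain ⟨-, hab', hcd', -, -, -, hva', hvc', hwb'⟩ := of_mem_switchSources hH
  refine eq_of_switch_eq h ?_ ?_ ?_ ?_ <;> simp [Set.insert_subset_iff, Set.disjoint_left, *]

theorem sum_card_switchSources_le (R p : ℕ) :
    ∑ G ∈ boundedDegreeGraphs V R, #(G.switchSources R p) ≤
      ∑ G ∈ boundedDegreeGraphs V R, #(G.switchTargets R p) :=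
  sum_card_le_sum_card_of_switching chainSwitch (fun _ hG _ hz => chainSwitch_mem hG hz)
    fun _ _ _ _ _ hG hH h => eq_of_chainSwitch_eq hG hH h

theorem card_dense_mul_le (R p : ℕ) :
    #{G ∈ boundedDegreeGraphs V R |
        Fintype.card V ≤ #G.adjPairs ∧ (G.deficientChains R p).Nonempty} *
        (Fintype.card V - 2 * R * (p + 2 * R + 3)) ^ 2 ≤
      Fintype.card V * R ^ (p + 3) * ∑ G ∈ boundedDegreeGraphs V R, #(G.deficient R) :=
  calc _ = ∑ G ∈ boundedDegreeGraphs V R with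
          Fintype.card V ≤ #G.adjPairs ∧ (G.deficientChains R p).Nonempty,
          (Fintype.card V - 2 * R * (p + 2 * R + 3)) ^ 2 := by
        rw [sum_const, smul_eq_mul]
    _ ≤ ∑ G ∈ boundedDegreeGraphs V R with
          Fintype.card V ≤ #G.adjPairs ∧ (G.deficientChains R p).Nonempty,
          #(G.switchSources R p) := sum_le_sum fun G hG => by
        obtain ⟨hG, hdense, f, hf⟩ := mem_filter.1 hG
        exact card_switchSources_ge (mem_boundedDegreeGraphs.1 hG) hdense hf
    _ ≤ ∑ G ∈ boundedDegreeGraphs V R, #(G.switchSources R p) :=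
        sum_le_sum_of_subset (filter_subset _ _)
    _ ≤ ∑ G ∈ boundedDegreeGraphs V R, #(G.switchTargets R p) := sum_card_switchSources_le R p
    _ ≤ ∑ G ∈ boundedDegreeGraphs V R, Fintype.card V * R ^ (p + 3) * #(G.deficient R) :=
        sum_le_sum fun G hG => card_switchTargets_le (mem_boundedDegreeGraphs.1 hG) p
    _ = _ := (mul_sum _ _ _).symm

theorem card_dense_sq_mul_le (R p : ℕ) (hn : 4 * R * (p + 2 * R + 3) ≤ Fintype.card V) :
    #{G ∈ boundedDegreeGraphs V R |
        Fintype.card V ≤ #G.adjPairs ∧ (G.deficientChains R p).Nonempty} ^ 2 * Fintype.card V ≤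
      16 * (2 * R + 1) * R ^ (2 * p + 6) * #(boundedDegreeGraphs V R) ^ 2 := by
  set n := Fintype.card V
  set N := #(boundedDegreeGraphs V R)
  set X := #{G ∈ boundedDegreeGraphs V R | n ≤ #G.adjPairs ∧ (G.deficientChains R p).Nonempty}
  set m := n - 2 * R * (p + 2 * R + 3)
  set s₁ := ∑ G ∈ boundedDegreeGraphs V R, #(G.deficient R)
  have hX : X * m ^ 2 ≤ n * R ^ (p + 3) * s₁ := card_dense_mul_le R p
  have hCS : s₁ ^ 2 ≤ N * ∑ G ∈ boundedDegreeGraphs V R, #(G.deficient R) ^ 2 :=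
    sq_sum_le_card_mul_sum_sq
  have hm : n ≤ 2 * m := by
    have : 4 * R * (p + 2 * R + 3) = 2 * (2 * R * (p + 2 * R + 3)) := by ring
    omega
  rcases n.eq_zero_or_pos with hn0 | hn0
  · simp [hn0]
  refine Nat.le_of_mul_le_mul_right (c := n ^ 3) ?_ (by positivity)
  calc X ^ 2 * n * n ^ 3 = X ^ 2 * n ^ 4 := by ring
    _ ≤ X ^ 2 * (2 * m) ^ 4 := by gcongr
    _ = 16 * (X * m ^ 2) ^ 2 := by ring
    _ ≤ 16 * (n * R ^ (p + 3) * s₁) ^ 2 := by gcongr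
    _ = 16 * n ^ 2 * R ^ (2 * p + 6) * s₁ ^ 2 := by ring
    _ ≤ 16 * n ^ 2 * R ^ (2 * p + 6) * (N * ((2 * R + 1) * n * N)) := by
        gcongr
        exact hCS.trans (Nat.mul_le_mul_left _ (sum_card_deficient_sq_le R))
    _ = 16 * (2 * R + 1) * R ^ (2 * p + 6) * N ^ 2 * n ^ 3 := by ring

theorem card_deficientChains_nonempty_sq_mul_le (hR : 2 ≤ R) (p : ℕ)
    (hn : 4 * R * (p + 2 * R + 3) ≤ Fintype.card V) :
    #{G ∈ boundedDegreeGraphs V R | (G.deficientChains R p).Nonempty} ^ 2 * Fintype.card V ≤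
      8 * (2 * R + 1) * (1 + 4 * R ^ (2 * p + 6)) * #(boundedDegreeGraphs V R) ^ 2 := by
  set n := Fintype.card V
  set N := #(boundedDegreeGraphs V R)
  set S := #{G ∈ boundedDegreeGraphs V R | #G.adjPairs < n}
  set X := #{G ∈ boundedDegreeGraphs V R | n ≤ #G.adjPairs ∧ (G.deficientChains R p).Nonempty}
  have hsplit : #{G ∈ boundedDegreeGraphs V R | (G.deficientChains R p).Nonempty} ≤ S + X := by
    refine (card_le_card fun G hG => ?_).trans (card_union_le _ _)
    simp only [mem_filter, mem_union] at hG ⊢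
    by_cases h : #G.adjPairs < n
    · exact Or.inl ⟨hG.1, h⟩
    · exact Or.inr ⟨hG.1, not_lt.1 h, hG.2⟩
  have hSN : S ≤ N := card_le_card (filter_subset _ _)
  have hS : S * n ≤ 4 * (2 * R + 1) * N := card_sparse_mul_le hR
  have hX := card_dense_sq_mul_le R p hn
  have hSX := two_mul_le_add_sq S X
  calc #{G ∈ boundedDegreeGraphs V R | (G.deficientChains R p).Nonempty} ^ 2 * n
      ≤ (S + X) ^ 2 * n := by gcongr
    _ ≤ 2 * (S * (S * n)) + 2 * (X ^ 2 * n) := by nlinarith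
    _ ≤ 2 * (N * (4 * (2 * R + 1) * N)) + 2 * (16 * (2 * R + 1) * R ^ (2 * p + 6) * N ^ 2) := by
        gcongr
    _ = _ := by ring

end SimpleGraph

theorem tendsto_div_zero_of_sq_mul_le {a b : ℕ → ℕ} (C : ℕ)
    (h : ∀ᶠ n in atTop, a n ^ 2 * n ≤ C * b n ^ 2) :
    Tendsto (fun n => (a n : ℝ) / b n) atTop (𝓝 0) := by
  have hsq : Tendsto (fun n => ((a n : ℝ) / b n) ^ 2) atTop (𝓝 0) := by
    refine squeeze_zero' (Eventually.of_forall fun n => by positivity) ?_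
      (tendsto_const_div_atTop_nhds_zero_nat (C : ℝ))
    filter_upwards [h, eventually_gt_atTop 0] with n hn hn0
    rcases (b n).eq_zero_or_pos with hb | hb
    · simp only [hb, CharP.cast_eq_zero, div_zero, ne_eq, OfNat.ofNat_ne_zero,
        not_false_eq_true, zero_pow]
      positivity
    · rw [div_pow, div_le_div_iff₀ (by positivity) (by positivity)]
      exact_mod_cast hn
  simpa [Real.sqrt_sq, div_nonneg] using hsq.sqrt

theorem degS_eq_degree {n : ℕ} (G : SimpleGraph (Fin n)) (v : Fin n) : degS G v = G.degree v := by
  rw [degS, ← card_neighborSet_eq_degree, ← Nat.card_eq_fintype_card, Nat.card_coe_set_eq]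
  rfl

theorem graphProp_eq (n R : ℕ) (P : SimpleGraph (Fin n) → Prop) [DecidablePred P] :
    graphProp n R P = (#{G ∈ boundedDegreeGraphs (Fin n) R | P G} : ℝ) /
      #(boundedDegreeGraphs (Fin n) R) := by
  rw [graphProp]
  congr 2 <;> rw [Nat.card_eq_fintype_card, Fintype.card_subtype] <;> congr 1 <;> ext G <;>
    simp [boundedDegreeGraphs, degS_eq_degree]

theorem graphProp_mono {n R : ℕ} {P Q : SimpleGraph (Fin n) → Prop} (h : ∀ G, P G → Q G) :
    graphProp n R P ≤ graphProp n R Q := by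
  rw [graphProp_eq, graphProp_eq]
  refine div_le_div_of_nonneg_right (Nat.cast_le.2 (card_le_card fun G hG => ?_))
    (Nat.cast_nonneg _)
  rw [mem_filter] at hG ⊢
  exact ⟨hG.1, h G hG.2⟩

theorem stmt14_general (R : ℕ) (hR : 2 ≤ R) (p : ℕ) :
    Tendsto (fun n : ℕ => graphProp n R (fun G =>
        ∃ v w : Fin n, v ≠ w ∧ degS G v ≤ R - 2 ∧ degS G w ≤ R - 1 ∧
          ∃ walk : G.Walk v w, walk.IsPath ∧ walk.length = p))
      atTop (𝓝 0) := by
  have hbound : ∀ᶠ n : ℕ in atTop,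
      #{G ∈ boundedDegreeGraphs (Fin n) R | (G.deficientChains R p).Nonempty} ^ 2 * n ≤
        8 * (2 * R + 1) * (1 + 4 * R ^ (2 * p + 6)) * #(boundedDegreeGraphs (Fin n) R) ^ 2 :=
    eventually_atTop.2 ⟨4 * R * (p + 2 * R + 3), fun n hn => by
      simpa using card_deficientChains_nonempty_sq_mul_le (V := Fin n) hR p (by simpa using hn)⟩
  refine squeeze_zero (fun n => by rw [graphProp]; positivity) (fun n => graphProp_mono ?_)
    ((tendsto_div_zero_of_sq_mul_le _ hbound).congr fun n => (graphProp_eq n R _).symm)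
  rintro G ⟨v, w, hvw, hv, hw, W, -, hW⟩
  rw [degS_eq_degree] at hv hw
  exact G.deficientChains_nonempty_of_walk hR hvw hv hw W hW

theorem stmt14 (R : ℕ) (hR : 2 ≤ R) (p : ℕ) (hp : 0 < p) :
    Tendsto (fun n : ℕ => graphProp n R (fun G =>
        ∃ v w : Fin n, v ≠ w ∧ degS G v ≤ R - 2 ∧ degS G w ≤ R - 1 ∧
          ∃ walk : G.Walk v w, walk.IsPath ∧ walk.length = p))
      atTop (𝓝 0) :=
  stmt14_general R hR p
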